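/- Let p > 2 be a prime and let a ∈ ℤ_p be a p-adic integer such that a + j is a p-adic unit for every j = 1, 2, ..., p-1. Then Σ_{k=0}^{p-1} (a+(p+1)/2)_k^2 (a+(−p+1)/2)_k^2 / (a+1)_k^4 ≡ ((p-1)!^2 / (a+1)_{(p-1)/2}^4) · Σ_{k=0}^{p-1} ((p+1)/2)_k^2 ((−p+1)/2)_k^2 / k!^4 (mod p), i.e., the difference of the two sides lies in p ℤ_p. -/

import Mathlib

/-!
Every `a + j` with `1 ≤ j ≤ p - 1` being a unit forces `a ≡ 0 (mod p)`. All denominators are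
units of `ℤ_p`, so the difference of the two sides is the image of a `p`-adic integer built from
Pochhammer symbols of `a`, and its reduction modulo `p` is the same expression evaluated at
`a = 0` in `𝔽_p`. There the two sums coincide, and the prefactor is
`(p-1)!² / ((p-1)/2)!⁴ = 1` by Wilson's theorem, because `(p-1)! = (-1)^n n! (p-1-n)!` in `𝔽_p`.
-/

open Finset

def poch {R : Type*} [CommRing R] (x : R) (k : ℕ) : R :=
  ∏ j ∈ Finset.range k, (x + (j : R))

open scoped Nat Ring

theorem map_ringInverse_of_isUnit {M N F : Type*} [MonoidWithZero M] [MonoidWithZero N]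
    [FunLike F M N] [MonoidHomClass F M N] (f : F) {x : M} (hx : IsUnit x) :
    f x⁻¹ʳ = (f x)⁻¹ʳ :=
  calc f x⁻¹ʳ = (f x)⁻¹ʳ * (f x * f x⁻¹ʳ) := by
        rw [Ring.inverse_mul_cancel_left _ _ (hx.map f)]
    _ = (f x)⁻¹ʳ := by rw [← map_mul, Ring.mul_inverse_cancel _ hx, map_one, mul_one]

theorem ZMod.factorial_mul_factorial_sub_one_sub (p : ℕ) [Fact p.Prime] {n : ℕ} (hn : n < p) :
    (n ! * (p - 1 - n)! : ZMod p) = (-1) ^ (n + 1) := by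
  have hdesc : ((p - 1).descFactorial n : ZMod p) = (-1) ^ n * n ! := by
    rw [Nat.descFactorial_eq_prod_range, ← prod_range_add_one_eq_factorial,
      Nat.cast_prod, Nat.cast_prod]
    nth_rw 2 [← card_range n]
    rw [← prod_neg]
    refine prod_congr rfl fun i hi => ?_
    rw [eq_neg_iff_add_eq_zero, ← Nat.cast_add, ← ZMod.natCast_self p]
    congr 1
    have := mem_range.mp hi
    omega
  have hwilson := ZMod.wilsons_lemma (p := p)
  rw [← Nat.factorial_mul_descFactorial (by omega : n ≤ p - 1), Nat.cast_mul, hdesc] at hwilson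
  have hsq : ((-1 : ZMod p) ^ n) ^ 2 = 1 := by
    rw [← pow_mul, pow_mul', neg_one_sq, one_pow]
  linear_combination (-1 : ZMod p) ^ n * hwilson - ((p - 1 - n)! * n ! : ZMod p) * hsq

theorem ZMod.factorial_half_pow_four (p : ℕ) [hp : Fact p.Prime] :
    (((p - 1) / 2)! : ZMod p) ^ 4 = 1 := by
  rcases hp.out.eq_two_or_odd' with rfl | hodd
  · simp
  have h := factorial_mul_factorial_sub_one_sub p (n := (p - 1) / 2) (by have := hp.out.pos; omega)
  rw [show p - 1 - (p - 1) / 2 = (p - 1) / 2 by have := Nat.odd_iff.mp hodd; omega] at h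
  rw [show (((p - 1) / 2)! : ZMod p) ^ 4 = (((p - 1) / 2)! * ((p - 1) / 2)!) ^ 2 by ring, h,
    ← pow_mul, pow_mul', neg_one_sq, one_pow]

namespace PadicInt

variable {p : ℕ} [Fact p.Prime]

theorem isUnit_iff_toZMod_ne_zero {x : ℤ_[p]} : IsUnit x ↔ toZMod x ≠ 0 := by
  rw [Ne, ← RingHom.mem_ker, ker_toZMod, IsLocalRing.mem_maximalIdeal, mem_nonunits_iff, not_not]

theorem dvd_of_toZMod_eq_zero {x : ℤ_[p]} (hx : toZMod x = 0) : (p : ℤ_[p]) ∣ x := by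
  rwa [← Ideal.mem_span_singleton, ← maximalIdeal_eq_span_p, ← ker_toZMod, RingHom.mem_ker]

theorem isUnit_factorial {k : ℕ} (hk : k < p) : IsUnit (k ! : ℤ_[p]) := by
  rw [isUnit_iff_toZMod_ne_zero, map_natCast, Ne, ZMod.natCast_eq_zero_iff,
    (Fact.out : p.Prime).dvd_factorial]
  omega

theorem toZMod_eq_zero_of_forall_isUnit_add {a : ℤ_[p]}
    (ha : ∀ j ∈ Icc 1 (p - 1), IsUnit (a + j)) : toZMod a = 0 := by
  by_contra h
  set r := (toZMod a).val
  have hr : r ≠ 0 := by rwa [Ne, ZMod.val_eq_zero]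
  have hrp : r < p := ZMod.val_lt _
  have := ha (p - r) (by simp only [mem_Icc]; omega)
  rw [isUnit_iff_toZMod_ne_zero, map_add, map_natCast, Nat.cast_sub hrp.le, ZMod.natCast_self,
    ZMod.natCast_val, ZMod.cast_id] at this
  exact this (by ring)

end PadicInt

section Pochhammer

variable {R S : Type*} [CommRing R] [CommRing S]

theorem map_poch (f : R →+* S) (x : R) (k : ℕ) : f (poch x k) = poch (f x) k := by
  simp only [poch, map_prod, map_add, map_natCast]

theorem poch_one (k : ℕ) : poch (1 : R) k = k ! := by
  simp only [poch, ← prod_range_add_one_eq_factorial, Nat.cast_prod, Nat.cast_add, Nat.cast_one,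
    add_comm]

theorem isUnit_poch_add_one {a : R} {n : ℕ} (ha : ∀ j ∈ Icc 1 n, IsUnit (a + j)) {k : ℕ}
    (hk : k ≤ n) : IsUnit (poch (a + 1) k) :=
  IsUnit.prod_iff.mpr fun j hj => by
    have h := ha (j + 1) (by simp only [mem_Icc, mem_range] at hj ⊢; omega)
    rwa [Nat.cast_succ, add_comm (j : R), ← add_assoc] at h

-- `⁻¹ʳ` (zero on non-units) keeps the ratio inside `ℤ_[p]`, where it can be reduced modulo `p`.
noncomputable def pochRatio (x y z : R) (k : ℕ) : R :=
  poch x k ^ 2 * poch y k ^ 2 * (poch z k ^ 4)⁻¹ʳ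

theorem pochRatio_eq_div {K : Type*} [Field K] (x y z : K) (k : ℕ) :
    pochRatio x y z k = poch x k ^ 2 * poch y k ^ 2 / poch z k ^ 4 := by
  rw [pochRatio, Ring.inverse_eq_inv, div_eq_mul_inv]

theorem map_pochRatio (f : R →+* S) (x y : R) {z : R} {k : ℕ} (hz : IsUnit (poch z k)) :
    f (pochRatio x y z k) = pochRatio (f x) (f y) (f z) k := by
  simp only [pochRatio, map_mul, map_ringInverse_of_isUnit f (hz.pow 4), map_pow, map_poch]

noncomputable def pochSum (n : ℕ) (b c a : R) : R :=
  ∑ k ∈ range n, pochRatio (a + b) (a + c) (a + 1) k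

theorem map_pochSum (f : R →+* S) {n : ℕ} (b c : R) {a : R}
    (ha : ∀ k < n, IsUnit (poch (a + 1) k)) :
    f (pochSum n b c a) = pochSum n (f b) (f c) (f a) := by
  simp only [pochSum, map_sum]
  refine sum_congr rfl fun k hk => ?_
  rw [map_pochRatio f _ _ (ha k (mem_range.mp hk)), map_add, map_add, map_add, map_one]

noncomputable def pochSumDefect (p : ℕ) (a : R) : R :=
  pochSum p (((p + 1) / 2 : ℕ) : R) (-(((p - 1) / 2 : ℕ) : R)) a -
    ((p - 1)! : R) ^ 2 * (poch (a + 1) ((p - 1) / 2) ^ 4)⁻¹ʳ *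
      pochSum p (((p + 1) / 2 : ℕ) : R) (-(((p - 1) / 2 : ℕ) : R)) 0

theorem map_pochSumDefect (f : R →+* S) {p : ℕ} {a : R}
    (ha : ∀ k ≤ p - 1, IsUnit (poch (a + 1) k)) (hfac : ∀ k ≤ p - 1, IsUnit (k ! : R)) :
    f (pochSumDefect p a) = pochSumDefect p (f a) := by
  have hfac' : ∀ k < p, IsUnit (poch ((0 : R) + 1) k) := fun k hk => by
    simpa only [zero_add, poch_one] using hfac k (by omega)
  simp only [pochSumDefect, map_sub, map_mul, map_pow, map_natCast, map_neg, map_zero,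
    map_pochSum f (n := p) _ _ fun k hk => ha k (by omega), map_pochSum f _ _ hfac',
    map_ringInverse_of_isUnit f ((ha _ (Nat.div_le_self _ _)).pow 4), map_poch, map_add, map_one]

theorem pochSumDefect_zero (p : ℕ) [Fact p.Prime] : pochSumDefect p (0 : ZMod p) = 0 := by
  simp only [pochSumDefect, zero_add, poch_one, ZMod.wilsons_lemma, ZMod.factorial_half_pow_four,
    Ring.inverse_one]
  ring

end Pochhammer

theorem padic_sum_congr_shifted_general (p : ℕ) [hp : Fact p.Prime] (a : ℤ_[p])
    (ha : ∀ j ∈ Finset.Icc 1 (p - 1), IsUnit (a + (j : ℤ_[p]))) :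
    ∃ y : ℤ_[p],
      (∑ k ∈ Finset.range p,
          poch ((a : ℚ_[p]) + (((p + 1) / 2 : ℕ) : ℚ_[p])) k ^ 2 *
            poch ((a : ℚ_[p]) - (((p - 1) / 2 : ℕ) : ℚ_[p])) k ^ 2 /
          poch ((a : ℚ_[p]) + 1) k ^ 4)
        - (((p - 1).factorial : ℚ_[p]) ^ 2 / poch ((a : ℚ_[p]) + 1) ((p - 1) / 2) ^ 4) *
            (∑ k ∈ Finset.range p,
              poch ((((p + 1) / 2 : ℕ) : ℚ_[p])) k ^ 2 *
                poch (-(((p - 1) / 2 : ℕ) : ℚ_[p])) k ^ 2 /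
              (k.factorial : ℚ_[p]) ^ 4)
      = (p : ℚ_[p]) * (y : ℚ_[p]) := by
  have hunit : ∀ k ≤ p - 1, IsUnit (poch (a + 1) k) := fun k => isUnit_poch_add_one ha
  have hfac : ∀ k ≤ p - 1, IsUnit (k ! : ℤ_[p]) := fun k hk =>
    PadicInt.isUnit_factorial (by have := hp.out.pos; omega)
  have hdefect : PadicInt.toZMod (pochSumDefect p a) = 0 := by
    rw [map_pochSumDefect _ hunit hfac, PadicInt.toZMod_eq_zero_of_forall_isUnit_add ha,
      pochSumDefect_zero]
  obtain ⟨y, hy⟩ := PadicInt.dvd_of_toZMod_eq_zero hdefect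
  have hcoe := congrArg PadicInt.Coe.ringHom hy
  rw [map_pochSumDefect _ hunit hfac, map_mul, map_natCast] at hcoe
  refine ⟨y, ?_⟩
  simp only [pochSumDefect, pochSum, pochRatio_eq_div, Ring.inverse_eq_inv, zero_add, poch_one,
    sub_eq_add_neg, div_eq_mul_inv] at hcoe ⊢
  exact hcoe

/-- For an odd prime `p` and a `p`-adic integer `a` with `a + j` a `p`-adic unit for
`j = 1, …, p-1`, one has
`Σ_{k=0}^{p-1} (a+(p+1)/2)_k^2 (a+(−p+1)/2)_k^2 / (a+1)_k^4
  ≡ ((p-1)!^2/(a+1)_{(p-1)/2}^4) · Σ_{k=0}^{p-1} ((p+1)/2)_k^2 ((−p+1)/2)_k^2 / k!^4`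
modulo `p`, i.e. the difference of the two sides lies in `p ℤ_p`.  Here
`(p+1)/2` is the integer `(p+1)/2` and `(−p+1)/2 = −((p-1)/2)`. -/
theorem padic_sum_congr_shifted (p : ℕ) [hp : Fact p.Prime] (hp2 : 2 < p) (a : ℤ_[p])
    (ha : ∀ j ∈ Finset.Icc 1 (p - 1), IsUnit (a + (j : ℤ_[p]))) :
    ∃ y : ℤ_[p],
      (∑ k ∈ Finset.range p,
          poch ((a : ℚ_[p]) + (((p + 1) / 2 : ℕ) : ℚ_[p])) k ^ 2 *
            poch ((a : ℚ_[p]) - (((p - 1) / 2 : ℕ) : ℚ_[p])) k ^ 2 /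
          poch ((a : ℚ_[p]) + 1) k ^ 4)
        - (((p - 1).factorial : ℚ_[p]) ^ 2 / poch ((a : ℚ_[p]) + 1) ((p - 1) / 2) ^ 4) *
            (∑ k ∈ Finset.range p,
              poch ((((p + 1) / 2 : ℕ) : ℚ_[p])) k ^ 2 *
                poch (-(((p - 1) / 2 : ℕ) : ℚ_[p])) k ^ 2 /
              (k.factorial : ℚ_[p]) ^ 4)
      = (p : ℚ_[p]) * (y : ℚ_[p]) :=
  padic_sum_congr_shifted_general p (hp := hp) a ha
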